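/- Let N ≥ 1 and 1 ≤ k ≤ N be integers. Let A_k^{(N)} be the k×k lower-bidiagonal matrix with diagonal entries (A)_{i,i} = i for i = 1,…,k and subdiagonal entries (A)_{i+1,i} = (i+1)·i·(N−i) for i = 1,…,k−1 (all other entries zero), and let E_k^{(N)} be the k×k matrix with entries (E)_{i,j} = (−1)^{i−j} · binom(i,j) · ((i−1)!·(N−j)!)/((j−1)!·(N−i)!) for 1 ≤ i,j ≤ k (so E is lower triangular since binom(i,j)=0 for j>i). Then A_k^{(N)} · E_k^{(N)} = E_k^{(N)} · D_k where D_k = diag(1,2,…,k); in particular the eigenvalues of A_k^{(N)} are exactly 1, 2, …, k and the columns of E_k^{(N)} are corresponding eigenvectors. -/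

import Mathlib

/-!
Away from the first row, the equation `A E = E D` at the entry `(i+1, j)` is a two-term
recurrence `(i+2)(i+1)(N-i-1) E(i,j) = (j-i-1) E(i+1,j)` (0-based), which reduces, after
cancelling factorials, to `C(n,k) (n+1) = C(n+1,k) (n+1-k)`. The first row of `E` is
`(1,0,…,0)`, as `E` is lower triangular. Since `A` is lower triangular too, its eigenvalues are
its diagonal entries `1,…,k`.
-/

open Matrix

/-- The lower-bidiagonal matrix `A_k^{(N)}` (1-based indices `i = (i₀ : Fin k) + 1`):
diagonal entries `i`, subdiagonal entries `(A)_{i+1,i} = (i+1)·i·(N-i)`. -/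
def Amat (N k : ℕ) : Matrix (Fin k) (Fin k) ℝ :=
  Matrix.of fun i j =>
    if (i : ℕ) = (j : ℕ) then ((i : ℕ) + 1 : ℝ)
    else if (i : ℕ) = (j : ℕ) + 1 then
      ((j : ℕ) + 2 : ℝ) * ((j : ℕ) + 1 : ℝ) * ((N : ℝ) - ((j : ℕ) + 1))
    else 0

/-- The matrix `E_k^{(N)}` with entries
`(E)_{i,j} = (-1)^{i-j} · binom(i,j) · ((i-1)!(N-j)!)/((j-1)!(N-i)!)` (1-based indices);
note `(-1)^{i-j} = (-1)^{i+j}`. -/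
noncomputable def Emat (N k : ℕ) : Matrix (Fin k) (Fin k) ℝ :=
  Matrix.of fun i j =>
    (-1 : ℝ) ^ ((i : ℕ) + (j : ℕ)) * (Nat.choose ((i : ℕ) + 1) ((j : ℕ) + 1) : ℝ) *
      (((i : ℕ).factorial : ℝ) * ((N - ((j : ℕ) + 1)).factorial : ℝ)) /
      (((j : ℕ).factorial : ℝ) * ((N - ((i : ℕ) + 1)).factorial : ℝ))

noncomputable def Ecoeff (N a b : ℕ) : ℝ :=
  (-1 : ℝ) ^ (a + b) * (Nat.choose (a + 1) (b + 1) : ℝ) *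
      ((a.factorial : ℝ) * ((N - (b + 1)).factorial : ℝ)) /
      ((b.factorial : ℝ) * ((N - (a + 1)).factorial : ℝ))

lemma Emat_apply (N k : ℕ) (i j : Fin k) : Emat N k i j = Ecoeff N i j := rfl

lemma cast_choose_mul_succ_eq (n k : ℕ) :
    (n.choose k : ℝ) * (n + 1) = ((n + 1).choose k : ℝ) * ((n : ℝ) + 1 - k) := by
  rcases le_or_gt k (n + 1) with h | h
  · have := congrArg (Nat.cast : ℕ → ℝ) (Nat.choose_mul_succ_eq n k)
    push_cast [Nat.cast_sub h] at this
    exact this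
  · rw [Nat.choose_eq_zero_of_lt (by omega), Nat.choose_eq_zero_of_lt h]
    simp

lemma Ecoeff_eq_zero_of_lt (N : ℕ) {a b : ℕ} (h : a < b) : Ecoeff N a b = 0 := by
  simp [Ecoeff, Nat.choose_eq_zero_of_lt (Nat.succ_lt_succ h)]

lemma Ecoeff_succ_left (N a b : ℕ) (h : a + 2 ≤ N) :
    ((a : ℝ) + 2) * ((a : ℝ) + 1) * ((N : ℝ) - ((a : ℝ) + 1)) * Ecoeff N a b =
      ((b : ℝ) - ((a : ℝ) + 1)) * Ecoeff N (a + 1) b := by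
  have hfac : ((N - (a + 1)).factorial : ℝ) =
      ((N : ℝ) - ((a : ℝ) + 1)) * ((N - (a + 2)).factorial : ℝ) := by
    rw [show N - (a + 1) = N - (a + 2) + 1 by omega, Nat.factorial_succ]
    push_cast [Nat.cast_sub h]
    ring
  have hN : (N : ℝ) - ((a : ℝ) + 1) ≠ 0 := by
    have : (a : ℝ) + 2 ≤ N := by exact_mod_cast h
    linarith
  have hchoose := cast_choose_mul_succ_eq (a + 1) (b + 1)
  push_cast at hchoose
  unfold Ecoeff
  rw [hfac, show a + 1 + 1 = a + 2 from rfl, Nat.factorial_succ,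
    show a + 1 + b = a + b + 1 by ring, pow_succ]
  push_cast
  field_simp
  linear_combination hchoose

section Amat

variable {n : Type*} (N k : ℕ) (M : Matrix (Fin k) n ℝ)

lemma Amat_mul_apply_of_val_eq_zero {i : Fin k} (hi : (i : ℕ) = 0) (j : n) :
    (Amat N k * M) i j = M i j := by
  rw [mul_apply, Fintype.sum_eq_single i]
  · simp [Amat, hi]
  · intro l hl
    have : (0 : ℕ) ≠ l := hi ▸ Fin.val_ne_of_ne hl.symm
    simp [Amat, this, hi]

lemma Amat_mul_apply_of_val_eq_succ {i i' : Fin k} (hi : (i : ℕ) = i' + 1) (j : n) :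
    (Amat N k * M) i j = ((i' : ℝ) + 2) * M i j +
      ((i' : ℝ) + 2) * ((i' : ℝ) + 1) * ((N : ℝ) - ((i' : ℝ) + 1)) * M i' j := by
  have hne : i ≠ i' := fun h => by simp [h] at hi
  rw [mul_apply, Fintype.sum_eq_add i i' hne]
  · have h : (i' : ℕ) + 1 ≠ i' := by omega
    simp only [Amat, of_apply, if_true, hi, h, if_false]
    push_cast
    ring
  · rintro l ⟨hli, hli'⟩
    have h1 : (i : ℕ) ≠ l := Fin.val_ne_of_ne (Ne.symm hli)
    have h2 : (i : ℕ) ≠ l + 1 := fun h => hli' (Fin.ext (by omega))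
    simp [Amat, h1, h2]

lemma Amat_isLowerTriangular : (Amat N k).IsLowerTriangular := by
  intro i l (h : i < l)
  have h1 : (i : ℕ) ≠ l := Fin.val_ne_of_ne h.ne
  have h2 : (i : ℕ) ≠ l + 1 := by have : (i : ℕ) < l := h; omega
  simp [Amat, h1, h2]

lemma det_Amat_sub_smul_one (μ : ℝ) :
    (Amat N k - μ • (1 : Matrix (Fin k) (Fin k) ℝ)).det = ∏ i : Fin k, ((i : ℕ) + 1 - μ) := by
  rw [smul_one_eq_diagonal, det_of_isLowerTriangular _
    ((Amat_isLowerTriangular N k).sub (blockTriangular_diagonal _))]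
  simp [Amat]

end Amat

lemma Amat_mul_Emat_eq_Emat_mul_diagonal {N k : ℕ} (hkN : k ≤ N) :
    Amat N k * Emat N k = Emat N k * diagonal (fun i : Fin k => ((i : ℕ) + 1 : ℝ)) := by
  ext i j
  rw [mul_diagonal]
  obtain hi | ⟨a, hi⟩ : (i : ℕ) = 0 ∨ ∃ a, (i : ℕ) = a + 1 := by
    cases (i : ℕ) <;> simp
  · rw [Amat_mul_apply_of_val_eq_zero N k _ hi]
    rcases Nat.eq_zero_or_pos (j : ℕ) with hj | hj
    · simp [hj]
    · simp [Emat_apply, hi, Ecoeff_eq_zero_of_lt N hj]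
  · let i' : Fin k := ⟨a, by omega⟩
    rw [Amat_mul_apply_of_val_eq_succ N k _ (i' := i') hi, Emat_apply, Emat_apply, hi]
    linear_combination Ecoeff_succ_left N a j (by omega)

theorem Amat_mul_Emat_general (N k : ℕ) (hkN : k ≤ N) :
    Amat N k * Emat N k =
        Emat N k * Matrix.diagonal (fun i : Fin k => ((i : ℕ) + 1 : ℝ)) ∧
      (∀ μ : ℝ, (Amat N k - μ • (1 : Matrix (Fin k) (Fin k) ℝ)).det = 0 ↔
        ∃ j : Fin k, μ = ((j : ℕ) + 1 : ℝ)) ∧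
      ∀ j : Fin k,
        (Amat N k).mulVec (fun i => Emat N k i j) =
          ((j : ℕ) + 1 : ℝ) • fun i => Emat N k i j := by
  have hmul := Amat_mul_Emat_eq_Emat_mul_diagonal hkN
  refine ⟨hmul, fun μ => ?_, fun j => ?_⟩
  · rw [det_Amat_sub_smul_one, Finset.prod_eq_zero_iff]
    simp only [Finset.mem_univ, true_and, sub_eq_zero]
    exact exists_congr fun _ => eq_comm
  · ext i
    rw [mulVec, dotProduct, ← mul_apply, hmul, mul_diagonal]
    simp [mul_comm]

/-- `A_k^{(N)} · E_k^{(N)} = E_k^{(N)} · D_k` with `D_k = diag(1,…,k)`;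
in particular the eigenvalues of `A_k^{(N)}` are exactly `1,…,k`, with the columns of
`E_k^{(N)}` as corresponding eigenvectors. -/
theorem Amat_mul_Emat (N k : ℕ) (hN : 1 ≤ N) (hk1 : 1 ≤ k) (hkN : k ≤ N) :
    Amat N k * Emat N k =
        Emat N k * Matrix.diagonal (fun i : Fin k => ((i : ℕ) + 1 : ℝ)) ∧
      (∀ μ : ℝ, (Amat N k - μ • (1 : Matrix (Fin k) (Fin k) ℝ)).det = 0 ↔
        ∃ j : Fin k, μ = ((j : ℕ) + 1 : ℝ)) ∧
      ∀ j : Fin k,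
        (Amat N k).mulVec (fun i => Emat N k i j) =
          ((j : ℕ) + 1 : ℝ) • fun i => Emat N k i j :=
  Amat_mul_Emat_general N k hkN
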